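/- Let B = (b_1, …, b_n) be a basis of linearly independent vectors in ℝ^m, and let u = Σ_{i=1}^n α_i b_i and v = Σ_{i=1}^n β_i b_i (with α, β ∈ ℤ^n) be vectors of L(B) with ‖u‖ = ‖v‖ = λ1(L(B)) and u ≠ ±v. Then there exists an index i such that α_i ≢ β_i (mod 2). -/

import Mathlib

/-! If all coefficients agreed mod 2, then `(u - v) / 2` would be a nonzero lattice vector. Since
`‖u‖ = ‖v‖` and `u + v ≠ 0`, the parallelogram law `‖u - v‖² = 4 ‖u‖² - ‖u + v‖²` makes it strictly
shorter than `λ₁`. -/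

noncomputable section

/-- The lattice generated by the vectors `B i`: all integer linear combinations. -/
def latticeOf {m n : ℕ} (B : Fin n → EuclideanSpace ℝ (Fin m)) :
    Set (EuclideanSpace ℝ (Fin m)) :=
  {v | ∃ x : Fin n → ℤ, v = ∑ i, (x i : ℝ) • B i}

/-- `λ₁ L`: the minimum Euclidean norm of a nonzero vector of `L`. -/
def lambda1 {m : ℕ} (L : Set (EuclideanSpace ℝ (Fin m))) : ℝ :=
  sInf {r | ∃ v ∈ L, v ≠ 0 ∧ ‖v‖ = r}

/-- `λ₂ L`: the smallest `r` such that `L` contains two linearly independent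
vectors of norm at most `r`. -/
def lambda2 {m : ℕ} (L : Set (EuclideanSpace ℝ (Fin m))) : ℝ :=
  sInf {r | ∃ v ∈ L, ∃ w ∈ L, LinearIndependent ℝ ![v, w] ∧ ‖v‖ ≤ r ∧ ‖w‖ ≤ r}

theorem lambda1_le_norm {m : ℕ} {L : Set (EuclideanSpace ℝ (Fin m))}
    {v : EuclideanSpace ℝ (Fin m)} (hv : v ∈ L) (hv0 : v ≠ 0) : lambda1 L ≤ ‖v‖ :=
  csInf_le ⟨0, by rintro r ⟨x, -, -, rfl⟩; exact norm_nonneg x⟩ ⟨v, hv, hv0, rfl⟩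

theorem two_inv_smul_sub_mem_latticeOf {m n : ℕ} (B : Fin n → EuclideanSpace ℝ (Fin m))
    {α β : Fin n → ℤ} (h : ∀ i, α i ≡ β i [ZMOD 2]) :
    (2⁻¹ : ℝ) • (∑ i, (α i : ℝ) • B i - ∑ i, (β i : ℝ) • B i) ∈ latticeOf B := by
  choose γ hγ using fun i ↦ (h i).symm.dvd
  refine ⟨γ, ?_⟩
  rw [← Finset.sum_sub_distrib, Finset.smul_sum]
  refine Finset.sum_congr rfl fun i _ ↦ ?_
  have hαβ : (α i : ℝ) - β i = 2 * γ i := by exact_mod_cast hγ i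
  rw [← sub_smul, smul_smul, hαβ, inv_mul_cancel_left₀ two_ne_zero]

theorem norm_two_inv_smul_sub_lt {E : Type*} [NormedAddCommGroup E] [InnerProductSpace ℝ E]
    {u v : E} (huv : ‖u‖ = ‖v‖) (hne : u ≠ -v) : ‖(2⁻¹ : ℝ) • (u - v)‖ < ‖u‖ := by
  have hpar := parallelogram_law_with_norm ℝ u v
  have hsum : 0 < ‖u + v‖ := norm_pos_iff.mpr fun h ↦ hne (eq_neg_of_add_eq_zero_left h)
  rw [norm_smul, norm_inv, Real.norm_two]
  nlinarith [norm_nonneg u, norm_nonneg (u - v)]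

theorem stmt8_general {m n : ℕ} (B : Fin n → EuclideanSpace ℝ (Fin m))
    (α β : Fin n → ℤ)
    (hu : ‖∑ i, (α i : ℝ) • B i‖ = lambda1 (latticeOf B))
    (hv : ‖∑ i, (β i : ℝ) • B i‖ = lambda1 (latticeOf B))
    (hne : (∑ i, (α i : ℝ) • B i) ≠ ∑ i, (β i : ℝ) • B i)
    (hne' : (∑ i, (α i : ℝ) • B i) ≠ -∑ i, (β i : ℝ) • B i) :
    ∃ i : Fin n, ¬ (α i ≡ β i [ZMOD 2]) := by
  by_contra! hcong
  have hw0 : (2⁻¹ : ℝ) • (∑ i, (α i : ℝ) • B i - ∑ i, (β i : ℝ) • B i) ≠ 0 :=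
    smul_ne_zero (inv_ne_zero two_ne_zero) (sub_ne_zero.mpr hne)
  have hle := lambda1_le_norm (two_inv_smul_sub_mem_latticeOf B hcong) hw0
  have hlt := norm_two_inv_smul_sub_lt (hu.trans hv.symm) hne'
  linarith

/-- If `u = ∑ αᵢ bᵢ` and `v = ∑ βᵢ bᵢ` are shortest nonzero vectors of
`L(B)` with `u ≠ ±v`, then some coefficient pair differs mod 2. -/
theorem stmt8 {m n : ℕ} (B : Fin n → EuclideanSpace ℝ (Fin m))
    (hB : LinearIndependent ℝ B) (α β : Fin n → ℤ)
    (hu : ‖∑ i, (α i : ℝ) • B i‖ = lambda1 (latticeOf B))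
    (hv : ‖∑ i, (β i : ℝ) • B i‖ = lambda1 (latticeOf B))
    (hne : (∑ i, (α i : ℝ) • B i) ≠ ∑ i, (β i : ℝ) • B i)
    (hne' : (∑ i, (α i : ℝ) • B i) ≠ -∑ i, (β i : ℝ) • B i) :
    ∃ i : Fin n, ¬ (α i ≡ β i [ZMOD 2]) :=
  stmt8_general B α β hu hv hne hne'

end
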